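/- For a simple random walk S, the tail σ-field G^∞ = ∩_{n ≥ 0} σ(T^n(S)) of the iterated Csáki–Vincze transform is P-trivial: every event in G^∞ has probability 0 or 1. -/

import Mathlib

open MeasureTheory ProbabilityTheory Filter

noncomputable section

/-- Increment `X_i = S_i - S_{i-1}` of a walk. -/
def inc (S : ℕ → ℤ) (i : ℕ) : ℤ := S i - S (i - 1)

/-- The times `τ_l` of the Csáki–Vincze construction. -/
def cvTau (S : ℕ → ℤ) : ℕ → ℕ
  | 0 => 0
  | l + 1 => sInf {i | cvTau S l < i ∧ S (i - 1) * S (i + 1) < 0}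

/-- The index `l` such that `τ_l + 1 ≤ j ≤ τ_{l+1}`, i.e. the number of
sign-change times strictly before `j`. -/
def cvEll (S : ℕ → ℤ) (j : ℕ) : ℕ :=
  ((Finset.range j).filter fun i => 0 < i ∧ S (i - 1) * S (i + 1) < 0).card

/-- The increments `X̄_j = (-1)^l X_1 X_{j+1}`, `τ_l + 1 ≤ j ≤ τ_{l+1}`. -/
def cvBarX (S : ℕ → ℤ) (j : ℕ) : ℤ := (-1) ^ cvEll S j * inc S 1 * inc S (j + 1)

/-- The Csáki–Vincze transform `T(S)_n = X̄_1 + ⋯ + X̄_n`. -/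
def CV (S : ℕ → ℤ) (n : ℕ) : ℤ := ∑ j ∈ Finset.range n, cvBarX S (j + 1)

/-- Iterates of the Csáki–Vincze transform. -/
def CViter : ℕ → (ℕ → ℤ) → ℕ → ℤ
  | 0, S => S
  | h + 1, S => CV (CViter h S)

/-- `S` is a simple random walk: `S_0 = 0` and the increments are
i.i.d. uniform on `{-1, 1}`. -/
def IsSRW {Ω : Type*} [MeasurableSpace Ω] (P : Measure Ω) (S : Ω → ℕ → ℤ) : Prop :=
  (∀ ω, S ω 0 = 0) ∧
  (∀ ω i, S ω (i + 1) - S ω i = 1 ∨ S ω (i + 1) - S ω i = -1) ∧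
  (∀ i, Measurable fun ω => S ω i) ∧
  iIndepFun (fun i ω => S ω (i + 1) - S ω i) P ∧
  (∀ i, P {ω | S ω (i + 1) - S ω i = 1} = 1 / 2) ∧
  (∀ i, P {ω | S ω (i + 1) - S ω i = -1} = 1 / 2)

/-!
Write `X̄_j = ε_j X_{j+1}`, where the sign `ε_j = (-1)^l X_1` is a function of `X_1, …, X_j`.
Flipping the signs of fair coin tosses at times chosen by the past gives fair coin tosses
again, so `(X_1, X̄_1, X̄_2, …)` is i.i.d. uniform on `{-1, 1}`: `T(S)` is again a simple
random walk and `X_1` is independent of `σ(T(S))`. Conversely `X_{j+1} = ε_j X̄_j`, so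
`S_0, …, S_{n+1}` are recovered from `X_1` and `T(S)_0, …, T(S)_n`. Since
`T^{n+1}(S) = T^n(T(S))`, induction on `n` gives `σ(T^n(S)) ⫫ σ(S_k, k ≤ n)`. The tail
`G^∞ ⊆ σ(S) = ⋁ₙ σ(S_k, k ≤ n)` is then independent of itself.
-/

def IsSignPath (p : ℕ → ℤ) : Prop :=
  p 0 = 0 ∧ ∀ i, p (i + 1) - p i = 1 ∨ p (i + 1) - p i = -1

/-- The sign `ε_j` with `X̄_j = ε_j X_{j+1}`, extended by `ε_0 = 1`. -/
def cvSign (p : ℕ → ℤ) : ℕ → ℤ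
  | 0 => 1
  | j + 1 => (-1) ^ cvEll p (j + 1) * inc p 1

/-- The sequence `(X_1, X̄_1, X̄_2, …)`. -/
def cvZ (p : ℕ → ℤ) (j : ℕ) : ℤ := cvSign p j * inc p (j + 1)

lemma inc_succ (p : ℕ → ℤ) (j : ℕ) : inc p (j + 1) = p (j + 1) - p j := by
  simp [inc]

lemma CV_succ_sub (p : ℕ → ℤ) (j : ℕ) : CV p (j + 1) - CV p j = cvZ p (j + 1) := by
  simp only [CV, Finset.sum_range_succ, add_sub_cancel_left, cvBarX, cvZ, cvSign]

lemma CV_eq_sum_cvZ (p : ℕ → ℤ) (k : ℕ) :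
    CV p k = ∑ j ∈ Finset.range k, cvZ p (j + 1) := by
  simp only [CV, cvBarX, cvZ, cvSign]

lemma CViter_succ' (n : ℕ) (p : ℕ → ℤ) : CViter (n + 1) p = CViter n (CV p) := by
  induction n with
  | zero => rfl
  | succ n ih => exact congrArg CV ih

lemma dependsOn_cvEll (j : ℕ) : DependsOn (cvEll · j) (Set.Iic j) := by
  intro p q h
  refine congrArg Finset.card (Finset.filter_congr fun i hi => ?_)
  rw [Finset.mem_range] at hi
  rw [h (i - 1) (by simp; omega), h (i + 1) (by simp; omega)]

lemma dependsOn_cvSign (j : ℕ) : DependsOn (cvSign · j) (Set.Iic j) := by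
  intro p q h
  cases j with
  | zero => rfl
  | succ j =>
    simp only [cvSign, inc]
    rw [show cvEll p (j + 1) = cvEll q (j + 1) from dependsOn_cvEll _ h, h 0 (by simp),
      h 1 (by simp)]

lemma dependsOn_cvZ (j : ℕ) : DependsOn (cvZ · j) (Set.Iic (j + 1)) := by
  intro p q h
  simp only [cvZ, inc_succ]
  have h_sign : cvSign p j = cvSign q j :=
    dependsOn_cvSign j fun i hi => h i (by simp at hi ⊢; omega)
  rw [h_sign, h j (by simp), h (j + 1) (by simp)]

lemma dependsOn_CV (k : ℕ) : DependsOn (CV · k) (Set.Iic (k + 1)) := by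
  intro p q h
  change CV p k = CV q k
  rw [CV_eq_sum_cvZ, CV_eq_sum_cvZ]
  refine Finset.sum_congr rfl fun j hj => dependsOn_cvZ _ fun i hi => h i ?_
  simp only [Finset.mem_range, Set.mem_Iic] at hj hi ⊢
  omega

lemma dependsOn_CViter (n k : ℕ) : DependsOn (CViter n · k) (Set.Iic (k + n)) := by
  induction n generalizing k with
  | zero => exact fun p q h => h k (by simp)
  | succ n ih =>
    intro p q h
    exact dependsOn_CV k fun i hi => ih i fun l hl => h l (by simp at hi hl ⊢; omega)

namespace IsSignPath

variable {p : ℕ → ℤ}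

lemma cvSign_mul_self (hp : IsSignPath p) (j : ℕ) : cvSign p j * cvSign p j = 1 := by
  cases j with
  | zero => rfl
  | succ j =>
    have h1 : inc p 1 = 1 ∨ inc p 1 = -1 := by simpa [inc_succ] using hp.2 0
    calc cvSign p (j + 1) * cvSign p (j + 1)
        = ((-1) ^ cvEll p (j + 1)) ^ 2 * inc p 1 ^ 2 := by simp only [cvSign]; ring
      _ = 1 := by
        rw [← pow_mul, pow_mul', neg_one_sq, one_pow, one_mul]
        rcases h1 with h | h <;> simp [h]

lemma sub_eq_cvSign_mul_cvZ (hp : IsSignPath p) (j : ℕ) :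
    p (j + 1) - p j = cvSign p j * cvZ p j := by
  rw [cvZ, ← mul_assoc, hp.cvSign_mul_self, one_mul, inc_succ]

lemma cvZ_eq_one_or_neg_one (hp : IsSignPath p) (j : ℕ) : cvZ p j = 1 ∨ cvZ p j = -1 := by
  have h := hp.cvSign_mul_self j
  rw [cvZ, inc_succ]
  rcases Int.eq_one_or_neg_one_of_mul_eq_one h with h' | h' <;>
    rcases hp.2 j with h'' | h'' <;> simp [h', h'']

end IsSignPath

lemma DependsOn.measurable_comp {Ω ι α β : Type*} {m : MeasurableSpace Ω} [MeasurableSpace α]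
    [Countable α] [MeasurableSingletonClass α] [MeasurableSpace β] {f : (ι → α) → β}
    {s : Set ι} (hs : s.Finite) (hf : DependsOn f s) {X : Ω → ι → α}
    (hX : ∀ i ∈ s, Measurable fun ω => X ω i) : Measurable fun ω => f (X ω) := by
  cases isEmpty_or_nonempty Ω with
  | inl _ => exact measurable_of_empty _
  | inr _ =>
    classical
    have := hs.to_subtype
    obtain ⟨ω₀⟩ := ‹Nonempty Ω›
    let g : (s → α) → β := fun y => f fun i => if h : i ∈ s then y ⟨i, h⟩ else X ω₀ i
    have hfg : (fun ω => f (X ω)) = fun ω => g fun i => X ω i :=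
      funext fun ω => hf fun i hi => by simp [hi]
    rw [hfg]
    exact (measurable_of_countable g).comp (measurable_pi_lambda _ fun i => hX i i.2)

section Independence

variable {Ω : Type*} {m0 : MeasurableSpace Ω} {P : Measure Ω}

lemma ProbabilityTheory.Indep.sup_right_of_indep_sup [IsProbabilityMeasure P]
    {ma mb mc : MeasurableSpace Ω} (ha : ma ≤ m0) (hb : mb ≤ m0) (hc : mc ≤ m0)
    (hab : Indep ma mb P) (hcab : Indep mc (ma ⊔ mb) P) : Indep ma (mb ⊔ mc) P := by
  let inters : Set (Set Ω) :=
    {s | ∃ B C, MeasurableSet[mb] B ∧ MeasurableSet[mc] C ∧ s = B ∩ C}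
  have h_pi : IsPiSystem inters := by
    rintro _ ⟨B, C, hB, hC, rfl⟩ _ ⟨B', C', hB', hC', rfl⟩ _
    exact ⟨B ∩ B', C ∩ C', hB.inter hB', hC.inter hC', Set.inter_inter_inter_comm _ _ _ _⟩
  have h_gen : mb ⊔ mc = MeasurableSpace.generateFrom inters := by
    refine le_antisymm (sup_le ?_ ?_) (MeasurableSpace.generateFrom_le ?_)
    · exact fun B hB => MeasurableSpace.measurableSet_generateFrom
        ⟨B, Set.univ, hB, MeasurableSet.univ, (Set.inter_univ B).symm⟩
    · exact fun C hC => MeasurableSpace.measurableSet_generateFrom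
        ⟨Set.univ, C, MeasurableSet.univ, hC, (Set.univ_inter C).symm⟩
    · rintro _ ⟨B, C, hB, hC, rfl⟩
      exact (le_sup_left (b := mc) _ hB).inter (le_sup_right (a := mb) _ hC)
  refine IndepSets.indep ha (sup_le hb hc) (@MeasurableSpace.isPiSystem_measurableSet Ω ma) h_pi
    (@MeasurableSpace.generateFrom_measurableSet Ω ma).symm h_gen ?_
  rw [IndepSets_iff]
  rintro A _ hA ⟨B, C, hB, hC, rfl⟩
  have hAB := (Indep_iff _ _ _).1 hab
  have hABC := (Indep_iff _ _ _).1 hcab.symm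
  calc P (A ∩ (B ∩ C)) = P (A ∩ B ∩ C) := by rw [Set.inter_assoc]
    _ = P A * P B * P C := by
      rw [hABC _ _ ((le_sup_left (b := mb) _ hA).inter (le_sup_right (a := ma) _ hB)) hC,
        hAB _ _ hA hB]
    _ = P A * P (B ∩ C) := by
      rw [hABC _ _ (le_sup_right (a := ma) _ hB) hC, mul_assoc]

lemma measure_eq_zero_or_one_of_indep_of_le_iSup [IsProbabilityMeasure P] {ι : Type*}
    [SemilatticeSup ι] {F : ι → MeasurableSpace Ω} {G : MeasurableSpace Ω}
    (hF_mono : Monotone F) (hF_le : ∀ n, F n ≤ m0) (hG : G ≤ ⨆ n, F n)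
    (h_indep : ∀ n, Indep (F n) G P) {A : Set Ω} (hA : MeasurableSet[G] A) :
    P A = 0 ∨ P A = 1 :=
  measure_eq_zero_or_one_of_indep_self (m := G)
    (indep_of_indep_of_le_left
      (indep_iSup_of_monotone h_indep hF_le (hG.trans (iSup_le hF_le)) hF_mono) hG) hA

end Independence

section SignFlip

variable {Ω β : Type*} {m0 : MeasurableSpace Ω} {P : Measure Ω} [IsProbabilityMeasure P]
  {mβ : MeasurableSpace β} [Neg β] [MeasurableNeg β]

/-- Given the past, `X j` and `-X j` have the same law, so the flip is invisible to every event
of the past. -/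
theorem iIndepFun_piecewise_neg {X : ℕ → Ω → β} {E : ℕ → Set Ω}
    [∀ j, DecidablePred (· ∈ E j)] (hX : ∀ i, Measurable (X i)) (h_ind : iIndepFun X P)
    (h_symm : ∀ i, IdentDistrib (-X i) (X i) P P)
    (hE : ∀ j, MeasurableSet[⨆ i < j, mβ.comap (X i)] (E j)) :
    iIndepFun (fun j => (E j).piecewise (X j) (-X j)) P ∧
      ∀ j, IdentDistrib ((E j).piecewise (X j) (-X j)) (X j) P P := by
  set Z : ℕ → Ω → β := fun j => (E j).piecewise (X j) (-X j)
  set past : ℕ → MeasurableSpace Ω := fun j => ⨆ i < j, mβ.comap (X i)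
  have past_le j : past j ≤ m0 := iSup₂_le fun i _ => (hX i).comap_le
  have past_mono : Monotone past := fun j k hjk => biSup_mono fun i hi => hi.trans_le hjk
  have hX_past {i j} (h : i < j) : Measurable[past j] (X i) :=
    Measurable.of_comap_le (le_iSup₂ (f := fun i (_ : i < j) => mβ.comap (X i)) i h)
  have hZ_past {i j} (h : i < j) : Measurable[past j] (Z i) :=
    Measurable.piecewise (m := past j) (past_mono h.le _ (hE i)) (hX_past h) (hX_past h).neg
  have hZ j : Measurable (Z j) := (hZ_past j.lt_succ_self).mono (past_le _) le_rfl
  have h_indep_past j : Indep (past j) (mβ.comap (X j)) P := by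
    have := indep_iSup_of_disjoint (fun i => (hX i).comap_le) h_ind
      (S := Set.Iio j) (T := {j}) (by simp)
    simpa using this
  have key j {B A} (hB : MeasurableSet[past j] B) (hA : MeasurableSet A) :
      P (B ∩ Z j ⁻¹' A) = P B * P (X j ⁻¹' A) := by
    have hEj : MeasurableSet (E j) := past_le j _ (hE j)
    have h_split : B ∩ Z j ⁻¹' A =
        (B ∩ E j) ∩ X j ⁻¹' A ∪ (B \ E j) ∩ (-X j) ⁻¹' A := by
      ext ω
      by_cases hω : ω ∈ E j <;> simp [Z, hω]
    have h_disj : Disjoint ((B ∩ E j) ∩ X j ⁻¹' A) ((B \ E j) ∩ (-X j) ⁻¹' A) :=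
      (Set.disjoint_sdiff_inter.symm.mono Set.inter_subset_left Set.inter_subset_left)
    have h_prod := (Indep_iff _ _ _).1 (h_indep_past j)
    rw [h_split, measure_union h_disj (((past_le j _ hB).diff hEj).inter ((hX j).neg hA)),
      h_prod _ _ (hB.inter (hE j)) ⟨A, hA, rfl⟩,
      h_prod _ ((-X j) ⁻¹' A) (hB.diff (hE j)) ⟨_, measurable_neg hA, rfl⟩,
      (h_symm j).measure_mem_eq hA, ← add_mul, measure_inter_add_sdiff B hEj]
  have h_ident j : IdentDistrib (Z j) (X j) P P :=
    ⟨(hZ j).aemeasurable, (hX j).aemeasurable, Measure.ext fun A hA => by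
      simpa [Measure.map_apply (hZ j) hA, Measure.map_apply (hX j) hA] using
        key j (B := Set.univ) MeasurableSet.univ hA⟩
  refine ⟨?_, h_ident⟩
  rw [iIndepFun_iff_measure_inter_preimage_eq_mul]
  intro s
  induction s using Finset.induction_on_max with
  | empty => simp
  | insert a s h_lt ih =>
    intro A hA
    have ha : a ∉ s := fun h => lt_irrefl a (h_lt a h)
    have hB : MeasurableSet[past a] (⋂ i ∈ s, Z i ⁻¹' A i) :=
      @Finset.measurableSet_biInter _ _ (past a) _ _ fun i hi => hZ_past (h_lt i hi) (hA i
        (Finset.mem_insert_of_mem hi))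
    rw [Finset.set_biInter_insert, Set.inter_comm, key a hB (hA a (Finset.mem_insert_self a s)),
      ih fun i hi => hA i (Finset.mem_insert_of_mem hi), Finset.prod_insert ha,
      (h_ident a).measure_mem_eq (hA a (Finset.mem_insert_self a s)), mul_comm]

end SignFlip

lemma measurable_of_measurable_cvZ {Ω : Type*} {M : MeasurableSpace Ω} {S : Ω → ℕ → ℤ}
    (hS : ∀ ω, IsSignPath (S ω)) {n : ℕ} (hZ : ∀ j ≤ n, Measurable fun ω => cvZ (S ω) j) :
    ∀ k ≤ n + 1, Measurable fun ω => S ω k := by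
  intro k
  induction k using Nat.strong_induction_on with
  | _ k ih =>
    intro hk
    cases k with
    | zero => simp [(hS _).1]
    | succ j =>
      have h_step : (fun ω => S ω (j + 1)) =
          fun ω => S ω j + cvSign (S ω) j * cvZ (S ω) j := by
        funext ω
        rw [← (hS ω).sub_eq_cvSign_mul_cvZ j, add_sub_cancel]
      rw [h_step]
      refine (ih j (by omega) (by omega)).add (Measurable.mul ?_ (hZ j (by omega)))
      exact DependsOn.measurable_comp (Set.finite_Iic j) (dependsOn_cvSign j)
        fun i hi => ih i (by simp at hi; omega) (by simp at hi; omega)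

namespace IsSRW

variable {Ω : Type*} [MeasurableSpace Ω] {P : Measure Ω} {S : Ω → ℕ → ℤ}

lemma isSignPath (hS : IsSRW P S) (ω : Ω) : IsSignPath (S ω) := ⟨hS.1 ω, hS.2.1 ω⟩

lemma measurable (hS : IsSRW P S) (k : ℕ) : Measurable fun ω => S ω k := hS.2.2.1 k

lemma measurable_inc (hS : IsSRW P S) (i : ℕ) : Measurable fun ω => S ω (i + 1) - S ω i :=
  (hS.measurable _).sub (hS.measurable _)

lemma identDistrib_neg_inc (hS : IsSRW P S) (i : ℕ) :
    IdentDistrib (fun ω => -(S ω (i + 1) - S ω i)) (fun ω => S ω (i + 1) - S ω i) P P := by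
  refine ⟨(hS.measurable_inc i).neg.aemeasurable, (hS.measurable_inc i).aemeasurable,
    Measure.ext_of_singleton fun a => ?_⟩
  rw [Measure.map_apply (f := fun ω => -(S ω (i + 1) - S ω i)) (hS.measurable_inc i).neg
      (measurableSet_singleton a),
    Measure.map_apply (hS.measurable_inc i) (measurableSet_singleton a)]
  have h_pre : (fun ω => -(S ω (i + 1) - S ω i)) ⁻¹' {a} =
      {ω | S ω (i + 1) - S ω i = -a} := by
    ext ω
    simp only [Set.mem_preimage, Set.mem_singleton_iff, Set.mem_ofPred_eq]
    omega
  rw [h_pre]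
  change _ = P {ω | S ω (i + 1) - S ω i = a}
  obtain ⟨h_one, h_neg_one⟩ := hS.2.2.2.2
  rcases eq_or_ne a 1 with rfl | h1
  · rw [h_one, h_neg_one]
  rcases eq_or_ne a (-1) with rfl | h2
  · rw [neg_neg, h_one, h_neg_one]
  have h_empty (b : ℤ) (hb1 : b ≠ 1) (hb2 : b ≠ -1) : {ω | S ω (i + 1) - S ω i = b} = ∅ :=
    Set.eq_empty_of_forall_notMem fun ω hω => by
      rcases hS.2.1 ω i with h | h <;> simp_all
  rw [h_empty a h1 h2, h_empty (-a) (by omega) (by omega)]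

lemma measurable_past (hS : IsSRW P S) {k j : ℕ} (hkj : k ≤ j) :
    Measurable[⨆ i < j, MeasurableSpace.comap (fun ω => S ω (i + 1) - S ω i) inferInstance]
      fun ω => S ω k := by
  have h_sum : (fun ω => S ω k) = fun ω => ∑ i ∈ Finset.range k, (S ω (i + 1) - S ω i) := by
    funext ω
    rw [Finset.sum_range_sub (S ω), hS.1 ω, sub_zero]
  rw [h_sum]
  refine Finset.measurable_sum _ fun i hi => Measurable.of_comap_le ?_
  exact le_iSup₂ (f := fun i (_ : i < j) =>
    MeasurableSpace.comap (fun ω => S ω (i + 1) - S ω i) inferInstance) i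
    ((Finset.mem_range.1 hi).trans_le hkj)

lemma measurable_cvZ (hS : IsSRW P S) (j : ℕ) : Measurable fun ω => cvZ (S ω) j :=
  DependsOn.measurable_comp (Set.finite_Iic _) (dependsOn_cvZ j) fun i _ => hS.measurable i

lemma iIndepFun_cvZ [IsProbabilityMeasure P] (hS : IsSRW P S) :
    iIndepFun (fun j ω => cvZ (S ω) j) P ∧
      ∀ j, IdentDistrib (fun ω => cvZ (S ω) j) (fun ω => S ω (j + 1) - S ω j) P P := by
  have h_piecewise (j : ℕ) : (fun ω => cvZ (S ω) j) = {ω | cvSign (S ω) j = 1}.piecewise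
      (fun ω => S ω (j + 1) - S ω j) (-fun ω => S ω (j + 1) - S ω j) := by
    funext ω
    rw [cvZ, inc_succ]
    rcases Int.eq_one_or_neg_one_of_mul_eq_one ((hS.isSignPath ω).cvSign_mul_self j) with
      h | h <;> simp [h]
  simp only [h_piecewise, show (fun j ω => cvZ (S ω) j) = _ from funext h_piecewise]
  refine iIndepFun_piecewise_neg (E := fun j => {ω | cvSign (S ω) j = 1}) hS.measurable_inc
    hS.2.2.2.1 hS.identDistrib_neg_inc fun j => ?_
  exact DependsOn.measurable_comp (Set.finite_Iic j) (dependsOn_cvSign j)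
    (fun k hk => hS.measurable_past hk) (measurableSet_singleton 1)

lemma cv [IsProbabilityMeasure P] (hS : IsSRW P S) : IsSRW P fun ω => CV (S ω) := by
  have h_inc : (fun i ω => CV (S ω) (i + 1) - CV (S ω) i) = fun i ω => cvZ (S ω) (i + 1) := by
    simp only [CV_succ_sub]
  obtain ⟨h_ind, h_ident⟩ := hS.iIndepFun_cvZ
  have h_half (i : ℕ) (a : ℤ) :
      P {ω | CV (S ω) (i + 1) - CV (S ω) i = a} = P {ω | S ω (i + 2) - S ω (i + 1) = a} := by
    simp only [CV_succ_sub]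
    exact (h_ident (i + 1)).measure_mem_eq (measurableSet_singleton a)
  refine ⟨fun ω => by simp [CV], fun ω i => ?_, fun k => ?_, ?_, fun i => ?_, fun i => ?_⟩
  · rw [CV_succ_sub]
    exact (hS.isSignPath ω).cvZ_eq_one_or_neg_one _
  · exact DependsOn.measurable_comp (Set.finite_Iic _) (dependsOn_CV k)
      fun i _ => hS.measurable i
  · rw [h_inc]
    exact h_ind.precomp Nat.succ_injective
  · rw [h_half]
    exact hS.2.2.2.2.1 (i + 1)
  · rw [h_half]
    exact hS.2.2.2.2.2 (i + 1)

lemma indep_inc_zero_CV [IsProbabilityMeasure P] (hS : IsSRW P S) :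
    Indep (MeasurableSpace.comap (fun ω => S ω 1 - S ω 0) inferInstance)
      (⨆ k, MeasurableSpace.comap (fun ω => CV (S ω) k) inferInstance) P := by
  obtain ⟨h_ind, -⟩ := hS.iIndepFun_cvZ
  let Z : ℕ → Ω → ℤ := fun j ω => cvZ (S ω) j
  have h_indep := indep_iSup_of_disjoint (fun j => (hS.measurable_cvZ j).comap_le) h_ind
    (S := {0}) (T := {0}ᶜ) disjoint_compl_right
  have h_Z0 : (fun ω => S ω 1 - S ω 0) = Z 0 := by
    funext ω
    simp [Z, cvZ, cvSign, inc_succ]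
  refine indep_of_indep_of_le_right (by simpa [h_Z0] using h_indep) (iSup_le fun k => ?_)
  refine Measurable.comap_le ?_
  simp only [CV_eq_sum_cvZ]
  refine Finset.measurable_sum _ fun j _ => Measurable.of_comap_le ?_
  exact le_iSup₂ (f := fun j (_ : j ∈ ({0}ᶜ : Set ℕ)) =>
    MeasurableSpace.comap (Z j) inferInstance) (j + 1) (Nat.succ_ne_zero j)

lemma iSup_comap_le_sup_comap_CV (hS : IsSRW P S) (n : ℕ) :
    (⨆ k ≤ n + 1, MeasurableSpace.comap (fun ω => S ω k) inferInstance) ≤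
      (⨆ k ≤ n, MeasurableSpace.comap (fun ω => CV (S ω) k) inferInstance) ⊔
        MeasurableSpace.comap (fun ω => S ω 1 - S ω 0) inferInstance := by
  have hCV {k : ℕ} (hk : k ≤ n) : Measurable[(⨆ k ≤ n,
      MeasurableSpace.comap (fun ω => CV (S ω) k) inferInstance) ⊔
        MeasurableSpace.comap (fun ω => S ω 1 - S ω 0) inferInstance] fun ω => CV (S ω) k :=
    Measurable.of_comap_le (le_sup_of_le_left (le_iSup₂ (f := fun k (_ : k ≤ n) =>
      MeasurableSpace.comap (fun ω => CV (S ω) k) inferInstance) k hk))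
  refine iSup₂_le fun k hk => Measurable.comap_le ?_
  refine measurable_of_measurable_cvZ hS.isSignPath (fun j hj => ?_) k hk
  cases j with
  | zero =>
    simp only [cvZ, cvSign, one_mul, inc_succ]
    exact Measurable.of_comap_le le_sup_right
  | succ j =>
    simp only [← CV_succ_sub]
    exact (hCV hj).sub (hCV (by omega))

lemma indep_CViter [IsProbabilityMeasure P] (hS : IsSRW P S) (n : ℕ) :
    Indep (⨆ k, MeasurableSpace.comap (fun ω => CViter n (S ω) k) inferInstance)
      (⨆ k ≤ n, MeasurableSpace.comap (fun ω => S ω k) inferInstance) P := by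
  induction n generalizing S with
  | zero =>
    refine indep_of_indep_of_le_right (indep_bot_right _) (iSup₂_le fun k hk => ?_)
    obtain rfl := Nat.le_zero.1 hk
    simp [hS.1, MeasurableSpace.comap_const]
  | succ n ih =>
    have hS' := hS.cv
    simp only [CViter_succ']
    have h_sigma_le : (⨆ k, MeasurableSpace.comap (fun ω => CV (S ω) k) inferInstance) ≤ ‹_› :=
      iSup_le fun k => (hS'.measurable k).comap_le
    have h_iter_le : (⨆ k, MeasurableSpace.comap (fun ω => CViter n (CV (S ω)) k) inferInstance) ≤
        ⨆ k, MeasurableSpace.comap (fun ω => CV (S ω) k) inferInstance :=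
      iSup_le fun k => Measurable.comap_le <|
        DependsOn.measurable_comp (Set.finite_Iic _) (dependsOn_CViter n k) fun i _ =>
          Measurable.of_comap_le (le_iSup (fun k =>
            MeasurableSpace.comap (fun ω => CV (S ω) k) inferInstance) i)
    have h_initial_le : (⨆ k ≤ n, MeasurableSpace.comap (fun ω => CV (S ω) k) inferInstance) ≤
        ⨆ k, MeasurableSpace.comap (fun ω => CV (S ω) k) inferInstance :=
      iSup₂_le fun k _ => le_iSup (fun k =>
        MeasurableSpace.comap (fun ω => CV (S ω) k) inferInstance) k
    refine indep_of_indep_of_le_right ?_ (hS.iSup_comap_le_sup_comap_CV n)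
    exact (ih hS').sup_right_of_indep_sup (h_iter_le.trans h_sigma_le)
      (h_initial_le.trans h_sigma_le) (hS.measurable_inc 0).comap_le
      (indep_of_indep_of_le_right hS.indep_inc_zero_CV (sup_le h_iter_le h_initial_le))

end IsSRW

/-- The tail σ-field `⋂ₙ σ(T^n(S))` is `P`-trivial. -/
theorem cviter_tail_trivial {Ω : Type*} [MeasurableSpace Ω] (P : Measure Ω)
    [IsProbabilityMeasure P] (S : Ω → ℕ → ℤ) (hS : IsSRW P S) :
    ∀ A : Set Ω,
      MeasurableSet[⨅ n : ℕ,
        ⨆ k : ℕ, MeasurableSpace.comap (fun ω => CViter n (S ω) k) inferInstance] A →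
      P A = 0 ∨ P A = 1 := by
  intro A hA
  have h_mono : Monotone fun n => ⨆ k ≤ n, MeasurableSpace.comap (fun ω => S ω k) inferInstance :=
    fun m n hmn => biSup_mono fun k hk => hk.trans hmn
  refine measure_eq_zero_or_one_of_indep_of_le_iSup h_mono
    (fun n => iSup₂_le fun k _ => (hS.measurable k).comap_le) ?_
    (fun n => indep_of_indep_of_le_right (hS.indep_CViter n).symm (iInf_le _ n)) hA
  refine (iInf_le _ 0).trans (iSup_le fun k => ?_)
  exact le_iSup_of_le (f := fun n => ⨆ j ≤ n, MeasurableSpace.comap (fun ω => S ω j) inferInstance)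
    k (le_iSup₂ (f := fun j (_ : j ≤ k) => MeasurableSpace.comap (fun ω => S ω j) inferInstance)
      k le_rfl)

end
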